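/- arXiv:1606.00527 — 3 statements merged into one kernel-verified Lean document; each statement's English description precedes it below -/
import Mathlib

section
/- Let X be a nonempty compact metric space, T : X → X a continuous map, and φ : X → ℝ a continuous function. Assume that ∫_X φ dμ < 0 for every T-invariant Borel probability measure μ on X (invariance meaning μ(T^{-1} S) = μ(S) for every Borel set S). Then there exist ε > 0 and N ∈ ℕ such that for every x ∈ X and every integer n ≥ N, the Birkhoff sum satisfies ∑_{i=0}^{n−1} φ(T^i x) ≤ −ε n. -/
/-!
Suppose not. Then for every `k` some orbit segment of length `n_k > k` has Birkhoff average of `φ`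
above `-1/(k+1)`. The empirical measures of these segments are asymptotically `T`-invariant, since
shifting the segment by one step changes an average by at most `2‖φ‖∞ / n_k`; by compactness of
the space of probability measures they accumulate at a `T`-invariant probability measure `μ`
with `∫ φ dμ ≥ 0` (Krylov–Bogolyubov), contradicting the hypothesis.
-/

open MeasureTheory Filter Topology BoundedContinuousFunction
open scoped ENNReal

section EmpiricalMeasure

variable {X : Type*} [MeasurableSpace X]

noncomputable def empiricalMeasure (T : X → X) (n : ℕ) (x : X) : Measure X :=
  (n : ℝ≥0∞)⁻¹ • ∑ i ∈ Finset.range n, Measure.dirac (T^[i] x)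

lemma isProbabilityMeasure_empiricalMeasure (T : X → X) {n : ℕ} (hn : n ≠ 0) (x : X) :
    IsProbabilityMeasure (empiricalMeasure T n x) := by
  constructor
  simp [empiricalMeasure, ENNReal.inv_mul_cancel (Nat.cast_ne_zero.2 hn) (ENNReal.natCast_ne_top n)]

lemma integral_empiricalMeasure [MeasurableSingletonClass X] (T : X → X) (n : ℕ) (x : X)
    (f : X → ℝ) : ∫ y, f y ∂empiricalMeasure T n x = birkhoffAverage ℝ T f n x := by
  rw [empiricalMeasure, integral_smul_measure,
    integral_finsetSum_measure fun i _ => integrable_dirac enorm_lt_top]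
  simp [birkhoffAverage, birkhoffSum, integral_dirac]

end EmpiricalMeasure

lemma abs_birkhoffAverage_comp_sub_le {X : Type*} [TopologicalSpace X] (T : X → X) (f : X →ᵇ ℝ)
    (n : ℕ) (x : X) :
    |birkhoffAverage ℝ T (f ∘ T) n x - birkhoffAverage ℝ T f n x| ≤ 2 * ‖f‖ / n := by
  have hcomp : birkhoffAverage ℝ T (f ∘ T) n x = birkhoffAverage ℝ T f n (T x) := by
    simp only [birkhoffAverage, birkhoffSum, Function.comp_apply, ← Function.iterate_succ_apply' T,
      Function.iterate_succ_apply]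
  rw [hcomp, ← Real.dist_eq, dist_birkhoffAverage_apply_birkhoffAverage]
  gcongr
  exact f.dist_le_two_norm _ _

theorem map_eq_of_tendsto_of_integral_comp_sub_tendsto_zero {X : Type*} [TopologicalSpace X]
    [MeasurableSpace X] [HasOuterApproxClosed X] [BorelSpace X] {T : X → X} (hT : Continuous T)
    {ι : Type*} {l : Filter ι} [l.NeBot] {ν : ι → ProbabilityMeasure X} {μ : ProbabilityMeasure X}
    (hνμ : Tendsto ν l (𝓝 μ))
    (hν : ∀ f : X →ᵇ ℝ, Tendsto (fun i => ∫ y, f (T y) ∂ν i - ∫ y, f y ∂ν i) l (𝓝 0)) :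
    (μ : Measure X).map T = μ := by
  have : IsFiniteMeasure ((μ : Measure X).map T) := Measure.isFiniteMeasure_map _ _
  refine ext_of_forall_integral_eq_of_IsFiniteMeasure fun f => ?_
  rw [integral_map hT.aemeasurable f.continuous.aestronglyMeasurable]
  have hlim := ProbabilityMeasure.tendsto_iff_forall_integral_tendsto.1 hνμ
  have hdiff := (hlim (f.compContinuous ⟨T, hT⟩)).sub (hlim f)
  exact sub_eq_zero.1 (tendsto_nhds_unique hdiff (hν f))

theorem exists_invariant_le_integral_of_le_birkhoffAverage {X : Type*} [TopologicalSpace X]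
    [T2Space X] [CompactSpace X] [MeasurableSpace X] [HasOuterApproxClosed X] [BorelSpace X]
    {T : X → X} (hT : Continuous T) (f : X →ᵇ ℝ) {n : ℕ → ℕ} {x : ℕ → X} {a : ℕ → ℝ} {c : ℝ}
    (hn : Tendsto n atTop atTop) (hn₀ : ∀ k, n k ≠ 0)
    (ha : ∀ k, a k ≤ birkhoffAverage ℝ T f (n k) (x k)) (hac : Tendsto a atTop (𝓝 c)) :
    ∃ μ : Measure X, IsProbabilityMeasure μ ∧ μ.map T = μ ∧ c ≤ ∫ y, f y ∂μ := by
  let ν : ℕ → ProbabilityMeasure X := fun k =>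
    ⟨empiricalMeasure T (n k) (x k), isProbabilityMeasure_empiricalMeasure T (hn₀ k) (x k)⟩
  -- `ProbabilityMeasure X` is compact (Prokhorov), so the empirical measures have a limit point
  let U : Ultrafilter ℕ := Ultrafilter.of atTop
  obtain ⟨μ, -, hνμ⟩ := isCompact_univ.ultrafilter_le_nhds (U.map ν) (by simp)
  have hU : (U : Filter ℕ) ≤ atTop := Ultrafilter.of_le atTop
  have hinv : ∀ g : X →ᵇ ℝ,
      Tendsto (fun k => ∫ y, g (T y) ∂ν k - ∫ y, g y ∂ν k) U (𝓝 0) := by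
    intro g
    refine Tendsto.mono_left (squeeze_zero_norm (a := fun k => 2 * ‖g‖ / n k) (fun k => ?_) ?_) hU
    · simp only [ν, ProbabilityMeasure.coe_mk, integral_empiricalMeasure]
      exact abs_birkhoffAverage_comp_sub_le T g (n k) (x k)
    · exact tendsto_const_nhds.div_atTop (tendsto_natCast_atTop_atTop.comp hn)
  refine ⟨μ, inferInstance,
    map_eq_of_tendsto_of_integral_comp_sub_tendsto_zero hT hνμ hinv, ?_⟩
  refine le_of_tendsto_of_tendsto (hac.mono_left hU)
    (ProbabilityMeasure.tendsto_iff_forall_integral_tendsto.1 hνμ f) (Eventually.of_forall ?_)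
  intro k
  simpa only [ν, ProbabilityMeasure.coe_mk, integral_empiricalMeasure] using ha k

theorem uniformly_negative_birkhoff_sums_general
    (X : Type*) [MetricSpace X] [CompactSpace X]
    [MeasurableSpace X] [BorelSpace X]
    (T : X → X) (hT : Continuous T)
    (φ : X → ℝ) (hφ : Continuous φ)
    (hneg : ∀ μ : Measure X, IsProbabilityMeasure μ →
      (∀ S : Set X, MeasurableSet S → μ (T ⁻¹' S) = μ S) →
      ∫ x, φ x ∂μ < 0) :
    ∃ ε > (0 : ℝ), ∃ N : ℕ, ∀ x : X, ∀ n : ℕ, N ≤ n →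
      ∑ i ∈ Finset.range n, φ (T^[i] x) ≤ -(ε * n) := by
  by_contra! h
  choose x n hn hsum using fun k : ℕ => h ((k : ℝ) + 1)⁻¹ (by positivity) (k + 1)
  have hn_pos : ∀ k, 0 < n k := fun k => (Nat.succ_pos k).trans_le (hn k)
  have ha : ∀ k : ℕ, -((k : ℝ) + 1)⁻¹ ≤ birkhoffAverage ℝ T φ (n k) (x k) := fun k => by
    rw [birkhoffAverage, smul_eq_mul, ← div_eq_inv_mul,
      le_div_iff₀ (by exact_mod_cast hn_pos k), neg_mul]
    exact (hsum k).le
  have hlim : Tendsto (fun k : ℕ => -((k : ℝ) + 1)⁻¹) atTop (𝓝 0) := by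
    simpa using (tendsto_one_div_add_atTop_nhds_zero_nat (𝕜 := ℝ)).neg
  obtain ⟨μ, hμ, hμT, hμφ⟩ := exists_invariant_le_integral_of_le_birkhoffAverage hT
    (mkOfCompact ⟨φ, hφ⟩) (tendsto_atTop_mono (fun k => (Nat.le_succ k).trans (hn k)) tendsto_id)
    (fun k => (hn_pos k).ne') ha hlim
  have hinv : ∀ S : Set X, MeasurableSet S → μ (T ⁻¹' S) = μ S := fun S hS => by
    rw [← Measure.map_apply hT.measurable hS, hμT]
  linarith [hneg μ hμ hinv, show 0 ≤ ∫ y, φ y ∂μ by simpa using hμφ]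

/-- If a continuous function `φ` on a compact metric space has negative integral
with respect to every `T`-invariant Borel probability measure, then its Birkhoff
sums are uniformly exponentially negative: there are `ε > 0` and `N` such that
`∑_{i<n} φ(Tⁱ x) ≤ -ε n` for all `x` and all `n ≥ N`. -/
theorem uniformly_negative_birkhoff_sums
    (X : Type*) [MetricSpace X] [CompactSpace X] [Nonempty X]
    [MeasurableSpace X] [BorelSpace X]
    (T : X → X) (hT : Continuous T)
    (φ : X → ℝ) (hφ : Continuous φ)
    (hneg : ∀ μ : Measure X, IsProbabilityMeasure μ →
      (∀ S : Set X, MeasurableSet S → μ (T ⁻¹' S) = μ S) →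
      ∫ x, φ x ∂μ < 0) :
    ∃ ε > (0 : ℝ), ∃ N : ℕ, ∀ x : X, ∀ n : ℕ, N ≤ n →
      ∑ i ∈ Finset.range n, φ (T^[i] x) ≤ -(ε * n) :=
  uniformly_negative_birkhoff_sums_general X T hT φ hφ hneg
end

section
/- Let ℝ^k act additively on a set X (so s·(t·x) = (s+t)·x and 0·x = x), let E be a finite-dimensional real inner product space with norm ‖·‖, and let D : ℝ^k × X → L(E,E) be a linear cocycle over the action: D(s+t, x) = D(s, t·x) ∘ D(t, x) and D(0, x) = id for all s, t ∈ ℝ^k and x ∈ X. Let χ : ℝ^k → ℝ be a linear functional and ε > 0. Assume that for every x ∈ X and u ∈ E the function s ↦ ‖D(s,x)u‖² e^{−2χ(s) − 2ε‖s‖} is integrable on ℝ^k, and define the ε-Lyapunov norm ‖u‖_{x,ε} := (∫_{ℝ^k} ‖D(s,x)u‖² e^{−2χ(s) − 2ε‖s‖} ds)^{1/2}. Then for all a ∈ ℝ^k, x ∈ X, and u ∈ E: e^{χ(a) − ε‖a‖} ‖u‖_{x,ε} ≤ ‖D(a,x)u‖_{a·x, ε} ≤ e^{χ(a) + ε‖a‖}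 ‖u‖_{x,ε}. -/
open MeasureTheory

/-- The fundamental two-sided growth estimate for the `ε`-Lyapunov norm
associated to a linear cocycle `D` over an `ℝ^k`-action with Lyapunov
exponent `χ`:
`e^{χ(a) − ε‖a‖} ‖u‖_{x,ε} ≤ ‖D(a,x)u‖_{a·x,ε} ≤ e^{χ(a) + ε‖a‖} ‖u‖_{x,ε}`. -/
theorem lyapunov_metric_growth_estimate
    (k : ℕ) (X : Type*)
    (act : EuclideanSpace ℝ (Fin k) → X → X)
    (hact0 : ∀ x, act 0 x = x)
    (hactadd : ∀ (s t : EuclideanSpace ℝ (Fin k)) (x : X), act s (act t x) = act (s + t) x)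
    (E : Type*) [NormedAddCommGroup E] [InnerProductSpace ℝ E] [FiniteDimensional ℝ E]
    (D : EuclideanSpace ℝ (Fin k) → X → (E →ₗ[ℝ] E))
    (hD0 : ∀ x, D 0 x = LinearMap.id)
    (hDcoc : ∀ (s t : EuclideanSpace ℝ (Fin k)) (x : X),
      D (s + t) x = (D s (act t x)).comp (D t x))
    (χ : EuclideanSpace ℝ (Fin k) →ₗ[ℝ] ℝ) (ε : ℝ) (hε : 0 < ε)
    (hint : ∀ (x : X) (u : E), Integrable
      (fun s : EuclideanSpace ℝ (Fin k) =>
        ‖D s x u‖ ^ 2 * Real.exp (-2 * χ s - 2 * ε * ‖s‖)))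
    (N : X → E → ℝ)
    (hN : ∀ (x : X) (u : E), N x u =
      Real.sqrt (∫ s : EuclideanSpace ℝ (Fin k),
        ‖D s x u‖ ^ 2 * Real.exp (-2 * χ s - 2 * ε * ‖s‖))) :
    ∀ (a : EuclideanSpace ℝ (Fin k)) (x : X) (u : E),
      Real.exp (χ a - ε * ‖a‖) * N x u ≤ N (act a x) (D a x u) ∧
      N (act a x) (D a x u) ≤ Real.exp (χ a + ε * ‖a‖) * N x u := by
  intro a x u
  set f : EuclideanSpace ℝ (Fin k) → ℝ :=
    fun t => ‖D t x u‖ ^ 2 * Real.exp (-2 * χ t - 2 * ε * ‖t‖) with hf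
  set h : EuclideanSpace ℝ (Fin k) → ℝ :=
    fun t => ‖D t x u‖ ^ 2 * Real.exp (-2 * χ (t - a) - 2 * ε * ‖t - a‖) with hh
  have hfi : Integrable f := hint x u
  set C : ℝ := Real.exp (χ a + ε * ‖a‖) with hC
  set c : ℝ := Real.exp (χ a - ε * ‖a‖) with hc
  have hC2 : C ^ 2 = Real.exp (2 * (χ a + ε * ‖a‖)) := by
    rw [hC, ← Real.exp_nat_mul]; ring_nf
  have hc2 : c ^ 2 = Real.exp (2 * (χ a - ε * ‖a‖)) := by
    rw [hc, ← Real.exp_nat_mul]; ring_nf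
  -- integrand identity
  have key : ∀ s, ‖D s (act a x) (D a x u)‖ ^ 2 * Real.exp (-2 * χ s - 2 * ε * ‖s‖)
      = h (s + a) := by
    intro s
    have hD : D s (act a x) (D a x u) = D (s + a) x u := by
      rw [hDcoc s a x]; rfl
    rw [hD, hh]
    simp [add_sub_cancel_right]
  have hkey : (fun s : EuclideanSpace ℝ (Fin k) =>
      ‖D s (act a x) (D a x u)‖ ^ 2 * Real.exp (-2 * χ s - 2 * ε * ‖s‖))
      = fun s => h (s + a) := funext key
  have hhi : Integrable h := by
    have h1 : Integrable (fun s : EuclideanSpace ℝ (Fin k) => h (s + a)) := by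
      rw [← hkey]; exact hint (act a x) (D a x u)
    have h2 := h1.comp_add_right (-a)
    simpa using h2
  have hI1 : (∫ s : EuclideanSpace ℝ (Fin k),
      ‖D s (act a x) (D a x u)‖ ^ 2 * Real.exp (-2 * χ s - 2 * ε * ‖s‖))
      = ∫ t, h t := by
    rw [hkey, integral_add_right_eq_self]
  -- pointwise bounds
  have hub : ∀ t, h t ≤ C ^ 2 * f t := by
    intro t
    have h1 : ‖t‖ - ‖a‖ ≤ ‖t - a‖ := norm_sub_norm_le t a
    have hχ : χ (t - a) = χ t - χ a := map_sub χ t a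
    have hexp : Real.exp (-2 * χ (t - a) - 2 * ε * ‖t - a‖)
        ≤ Real.exp (2 * (χ a + ε * ‖a‖)) * Real.exp (-2 * χ t - 2 * ε * ‖t‖) := by
      rw [← Real.exp_add]
      apply Real.exp_le_exp.mpr
      rw [hχ]
      nlinarith [hε.le]
    calc h t = ‖D t x u‖ ^ 2 * Real.exp (-2 * χ (t - a) - 2 * ε * ‖t - a‖) := rfl
      _ ≤ ‖D t x u‖ ^ 2 * (Real.exp (2 * (χ a + ε * ‖a‖)) * Real.exp (-2 * χ t - 2 * ε * ‖t‖)) :=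
          mul_le_mul_of_nonneg_left hexp (by positivity)
      _ = C ^ 2 * f t := by rw [hC2, hf]; ring
  have hlb : ∀ t, c ^ 2 * f t ≤ h t := by
    intro t
    have h1 : ‖t - a‖ ≤ ‖t‖ + ‖a‖ := norm_sub_le t a
    have hχ : χ (t - a) = χ t - χ a := map_sub χ t a
    have hexp : Real.exp (2 * (χ a - ε * ‖a‖)) * Real.exp (-2 * χ t - 2 * ε * ‖t‖)
        ≤ Real.exp (-2 * χ (t - a) - 2 * ε * ‖t - a‖) := by
      rw [← Real.exp_add]
      apply Real.exp_le_exp.mpr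
      rw [hχ]
      nlinarith [hε.le]
    calc c ^ 2 * f t = ‖D t x u‖ ^ 2 *
          (Real.exp (2 * (χ a - ε * ‖a‖)) * Real.exp (-2 * χ t - 2 * ε * ‖t‖)) := by
          rw [hc2, hf]; ring
      _ ≤ ‖D t x u‖ ^ 2 * Real.exp (-2 * χ (t - a) - 2 * ε * ‖t - a‖) :=
          mul_le_mul_of_nonneg_left hexp (by positivity)
      _ = h t := rfl
  have hup : ∫ t, h t ≤ C ^ 2 * ∫ t, f t := by
    calc ∫ t, h t ≤ ∫ t, C ^ 2 * f t := integral_mono hhi (hfi.const_mul _) hub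
      _ = C ^ 2 * ∫ t, f t := integral_const_mul _ _
  have hlo : c ^ 2 * ∫ t, f t ≤ ∫ t, h t := by
    calc c ^ 2 * ∫ t, f t = ∫ t, c ^ 2 * f t := (integral_const_mul _ _).symm
      _ ≤ ∫ t, h t := integral_mono (hfi.const_mul _) hhi hlb
  have hfnn : 0 ≤ ∫ t, f t :=
    integral_nonneg fun t => by positivity
  have hNax : N (act a x) (D a x u) = Real.sqrt (∫ t, h t) := by
    rw [hN, hI1]
  have hNx : N x u = Real.sqrt (∫ t, f t) := hN x u
  constructor
  · rw [hNax, hNx]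
    calc Real.exp (χ a - ε * ‖a‖) * Real.sqrt (∫ t, f t)
        = Real.sqrt (c ^ 2 * ∫ t, f t) := by
          rw [Real.sqrt_mul (sq_nonneg c), Real.sqrt_sq (Real.exp_nonneg _)]
      _ ≤ Real.sqrt (∫ t, h t) := Real.sqrt_le_sqrt hlo
  · rw [hNax, hNx]
    calc Real.sqrt (∫ t, h t) ≤ Real.sqrt (C ^ 2 * ∫ t, f t) := Real.sqrt_le_sqrt hup
      _ = Real.exp (χ a + ε * ‖a‖) * Real.sqrt (∫ t, f t) := by
          rw [Real.sqrt_mul (sq_nonneg C), Real.sqrt_sq (Real.exp_nonneg _)]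
end

section
/- Let S be a nonempty closed subset of the circle ℝ/ℤ such that for every x ∈ S both 2x ∈ S and 3x ∈ S. Then either S is finite or S = ℝ/ℤ. -/
/-!
Since `log 2 / log 3` is irrational, the semigroup generated by `2 ^ s` and `3 ^ t` is
non-lacunary: the ratios of its consecutive elements tend to `1`. So the multiples of a small
nonzero `u` by its elements come within `ε` of every point of the circle, and a set invariant
under it which accumulates at a point `c` fixed by it is dense.

Let `A` be the derived set of an infinite `S`; it is closed and invariant. If `A` contains a
rational point, some `2 ^ a * 3 ^ b` maps it to a point of `A` fixed by some `2 ^ s` and `3 ^ t`,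
and `S` is dense. Otherwise every nonempty closed invariant `C ⊆ A` is infinite, so `C - C`
accumulates at the fixed point `0` and is the whole circle. For `q` prime to `6`, the point
`τ = 1 / q` is fixed by `2 ^ φ(q)` and `3 ^ φ(q)`, hence the sets `{x | x + j • τ ∈ A, j ≤ m}`
are closed and invariant, and by induction on `m` nonempty: `A` contains the `1 / q`-net
`x, x + τ, …, x + (q - 1) • τ`.
-/

open Set Filter Topology
open scoped Pointwise

def IsNonLacunary (M : Submonoid ℕ) : Prop :=
  ∀ ε > 0, ∀ᶠ y : ℝ in atTop, ∃ n ∈ M, (n : ℝ) ∈ Icc y ((1 + ε) * y)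

theorem AddSubmonoid.eventually_exists_mem_Icc (L : AddSubmonoid ℝ) {u v : ℝ} (hu : 0 ≤ u)
    (huv : u < v) (huL : u ∈ L) (hvL : v ∈ L) :
    ∀ᶠ t in atTop, ∃ x ∈ L, x ∈ Icc t (t + (v - u)) := by
  set d := v - u with hd_def
  have hd : 0 < d := sub_pos.mpr huv
  have hv : 0 < v := hu.trans_lt huv
  filter_upwards [eventually_ge_atTop (v ^ 2 / d)] with t ht
  rw [div_le_iff₀ hd] at ht
  -- for `j ≤ K`, `(K - j) • u + j • v = K * u + j * d` runs through a `d`-net of `[K * u, K * v]`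
  set K := ⌈t / v⌉₊
  have hKd : K * d = K * v - K * u := by rw [hd_def]; ring
  have htK : t ≤ K * v := (div_le_iff₀ hv).mp (Nat.le_ceil _)
  have hKt : K * v < t + v := by
    rw [← lt_div_iff₀ hv, add_div, div_self hv.ne']
    exact Nat.ceil_lt_add_one (div_nonneg (by nlinarith) hv.le)
  have hvK : v ≤ K * d := by nlinarith [mul_le_mul_of_nonneg_right htK hd.le]
  set j := ⌈(t - K * u) / d⌉₊
  have hjd : j * d = j * v - j * u := by rw [hd_def]; ring
  have hjK : j ≤ K := Nat.ceil_le.mpr <| (div_le_iff₀ hd).mpr (by linarith)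
  have hj : t - K * u ≤ j * d := (div_le_iff₀ hd).mp (Nat.le_ceil _)
  have hj' : j * d < t - K * u + d := by
    rw [← lt_div_iff₀ hd, add_div, div_self hd.ne']
    exact Nat.ceil_lt_add_one (div_nonneg (by linarith) hd.le)
  refine ⟨(K - j) • u + j • v, add_mem (nsmul_mem huL _) (nsmul_mem hvL _), ?_⟩
  simp only [nsmul_eq_mul, Nat.cast_sub hjK, mem_Icc]
  constructor <;> linarith

theorem AddSubmonoid.exists_mem_closure_pair_lt_le_add {p r δ : ℝ} (hp : 0 ≤ p) (hr : 0 ≤ r)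
    (hpr : Irrational (p / r)) (hδ : 0 < δ) :
    ∃ u ∈ AddSubmonoid.closure {p, r}, ∃ v ∈ AddSubmonoid.closure {p, r},
      0 ≤ u ∧ u < v ∧ v ≤ u + δ := by
  obtain ⟨e, he, he0, heδ⟩ : ∃ e ∈ AddSubgroup.closure {p, r}, e ∈ Ioo 0 δ :=
    (dense_addSubgroupClosure_pair_iff.mpr hpr).exists_mem_open isOpen_Ioo ⟨δ / 2, by simp [hδ]⟩
  obtain ⟨m, n, rfl⟩ := AddSubgroup.mem_closure_pair.mp he
  -- split the small element `m • p + n • r` of the dense group into positive and negative parts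
  refine ⟨(-m).toNat • p + (-n).toNat • r, (AddSubmonoid.mem_closure_pair _ _ _).mpr ⟨_, _, rfl⟩,
    m.toNat • p + n.toNat • r, (AddSubmonoid.mem_closure_pair _ _ _).mpr ⟨_, _, rfl⟩,
    by positivity, ?_⟩
  have hm : (m : ℝ) = m.toNat - (-m).toNat := by exact_mod_cast (Int.toNat_sub_toNat_neg m).symm
  have hn : (n : ℝ) = n.toNat - (-n).toNat := by exact_mod_cast (Int.toNat_sub_toNat_neg n).symm
  simp only [zsmul_eq_mul, nsmul_eq_mul, hm, hn] at he0 heδ ⊢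
  constructor <;> linarith

theorem AddSubmonoid.eventually_exists_mem_closure_pair_Icc {p r δ : ℝ} (hp : 0 ≤ p) (hr : 0 ≤ r)
    (hpr : Irrational (p / r)) (hδ : 0 < δ) :
    ∀ᶠ t in atTop, ∃ x ∈ AddSubmonoid.closure {p, r}, x ∈ Icc t (t + δ) := by
  obtain ⟨u, hu, v, hv, hu0, huv, hvu⟩ := AddSubmonoid.exists_mem_closure_pair_lt_le_add hp hr hpr hδ
  filter_upwards [eventually_exists_mem_Icc _ hu0 huv hu hv] with t ⟨x, hx, hxt⟩
  exact ⟨x, hx, Icc_subset_Icc_right (by linarith) hxt⟩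

theorem irrational_log_two_div_log_three : Irrational (Real.log 2 / Real.log 3) := by
  rintro ⟨q, hq⟩
  have hq0 : 0 < q := by
    have : (0 : ℝ) < Real.log 2 / Real.log 3 := by positivity
    exact_mod_cast hq ▸ this
  have hnum : ((q.num.toNat : ℕ) : ℝ) = q.num := by
    exact_mod_cast Int.toNat_of_nonneg (Rat.num_nonneg.mpr hq0.le)
  have hlog : Real.log ((3 : ℝ) ^ q.num.toNat) = Real.log ((2 : ℝ) ^ q.den) := by
    rw [Real.log_pow, Real.log_pow, hnum]
    rw [Rat.cast_def, div_eq_div_iff (by positivity) (by positivity)] at hq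
    linarith
  have hpow : (3 : ℕ) ^ q.num.toNat = 2 ^ q.den := by
    exact_mod_cast Real.log_injOn_pos (by simp) (by simp) hlog
  have := congrArg (· % 2) hpow
  simp [Nat.pow_mod, Nat.zero_pow q.den_pos] at this

theorem isNonLacunary_closure_two_pow_three_pow {s t : ℕ} (hs : s ≠ 0) (ht : t ≠ 0) :
    IsNonLacunary (Submonoid.closure {2 ^ s, 3 ^ t}) := by
  intro ε hε
  have hirr : Irrational (Real.log (2 ^ s) / Real.log (3 ^ t)) := by
    have : Real.log (2 ^ s) / Real.log (3 ^ t) = ((s / t : ℚ) : ℝ) * (Real.log 2 / Real.log 3) := by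
      push_cast
      rw [Real.log_pow, Real.log_pow]
      field_simp
    rw [this]
    exact irrational_log_two_div_log_three.ratCast_mul (by positivity)
  filter_upwards [Real.tendsto_log_atTop.eventually
      (AddSubmonoid.eventually_exists_mem_closure_pair_Icc
        (Real.log_nonneg (one_le_pow₀ (by norm_num))) (Real.log_nonneg (one_le_pow₀ (by norm_num)))
        hirr (Real.log_pos (by linarith : 1 < 1 + ε))),
    eventually_gt_atTop 0] with y ⟨x, hx, hyx, hxy⟩ hy
  obtain ⟨a, b, rfl⟩ := (AddSubmonoid.mem_closure_pair _ _ _).mp hx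
  refine ⟨(2 ^ s) ^ a * (3 ^ t) ^ b, (Submonoid.mem_closure_pair _ _ _).mpr ⟨a, b, rfl⟩, ?_⟩
  have hn : (0 : ℝ) < ((2 ^ s) ^ a * (3 ^ t) ^ b : ℕ) := by positivity
  have hlog : Real.log ((2 ^ s) ^ a * (3 ^ t) ^ b : ℕ) =
      a • Real.log (2 ^ s) + b • Real.log (3 ^ t) := by
    push_cast
    rw [Real.log_mul (by positivity) (by positivity), Real.log_pow (2 ^ s) a,
      Real.log_pow (3 ^ t) b, nsmul_eq_mul, nsmul_eq_mul]
  rw [← hlog] at hyx hxy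
  rw [← Real.log_mul hy.ne' (by positivity), mul_comm y] at hxy
  exact ⟨(Real.log_le_log_iff hy hn).mp hyx, (Real.log_le_log_iff hn (by positivity)).mp hxy⟩

section AddMonoid

variable {G : Type*} [AddMonoid G]

theorem Submonoid.forall_mem_closure_nsmul_mem {s : Set ℕ} {B : Set G}
    (h : ∀ m ∈ s, ∀ x ∈ B, m • x ∈ B) : ∀ n ∈ Submonoid.closure s, ∀ x ∈ B, n • x ∈ B := by
  intro n hn
  induction hn using Submonoid.closure_induction with
  | mem m hm => exact h m hm
  | one => exact fun x hx => by rwa [one_nsmul]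
  | mul m n _ _ hm hn => exact fun x hx => by rw [mul_nsmul']; exact hm _ (hn x hx)

theorem Submonoid.nsmul_eq_self_of_mem_closure {s : Set ℕ} {x : G} (h : ∀ m ∈ s, m • x = x)
    {n : ℕ} (hn : n ∈ Submonoid.closure s) : n • x = x :=
  forall_mem_closure_nsmul_mem (B := {x}) (by simpa using h) n hn x rfl

theorem nsmul_eq_self_of_modEq_one {x : G} {q n : ℕ} (hx : q • x = 0) (hn : n ≡ 1 [MOD q]) :
    n • x = x := by
  rw [← mod_addOrderOf_nsmul, (hn.of_dvd (addOrderOf_dvd_of_nsmul_eq_zero hx) :),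
    mod_addOrderOf_nsmul, one_nsmul]

theorem IsOfFinAddOrder.exists_pow_add_nsmul_eq {x : G} (hx : IsOfFinAddOrder x) (p : ℕ) :
    ∃ a s, s ≠ 0 ∧ p ^ (a + s) • x = p ^ a • x := by
  obtain ⟨a, b, hab, h⟩ := hx.finite_multiples.exists_lt_map_eq_of_forall_mem
    (f := fun i : ℕ => p ^ i • x) fun i => (AddSubmonoid.mem_multiples_iff _ _).mpr ⟨p ^ i, rfl⟩
  exact ⟨a, b - a, by omega, by rw [Nat.add_sub_cancel' hab.le]; exact h.symm⟩

end AddMonoid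

theorem Set.infinite_of_not_isOfFinAddOrder {G : Type*} [AddLeftCancelMonoid G] {M : Submonoid ℕ}
    {C : Set G} (hC : ∀ m ∈ M, ∀ x ∈ C, m • x ∈ C) {n : ℕ} (hn : 2 ≤ n) (hnM : n ∈ M) {x : G}
    (hx : x ∈ C) (hxt : ¬IsOfFinAddOrder x) : C.Infinite := by
  have hmem : ∀ i : ℕ, n ^ i • x ∈ C := fun i => hC _ (pow_mem hnM i) x hx
  have hinj : Function.Injective fun i : ℕ => n ^ i • x :=
    (injective_nsmul_iff_not_isOfFinAddOrder.mpr hxt).comp (Nat.pow_right_injective hn)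
  exact infinite_of_injective_forall_mem hinj hmem

theorem IsOfFinAddOrder.exists_pow_mul_pow_nsmul_fixed {G : Type*} [AddCommMonoid G] {x : G}
    (hx : IsOfFinAddOrder x) (p q : ℕ) : ∃ a b s t, s ≠ 0 ∧ t ≠ 0 ∧
      p ^ s • (p ^ a * q ^ b) • x = (p ^ a * q ^ b) • x ∧
      q ^ t • (p ^ a * q ^ b) • x = (p ^ a * q ^ b) • x := by
  obtain ⟨a, s, hs, hp⟩ := hx.exists_pow_add_nsmul_eq p
  obtain ⟨b, t, ht, hq⟩ := hx.exists_pow_add_nsmul_eq q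
  refine ⟨a, b, s, t, hs, ht, ?_, ?_⟩
  · calc p ^ s • (p ^ a * q ^ b) • x = q ^ b • p ^ (a + s) • x := by
          rw [smul_smul, smul_smul]; ring_nf
      _ = (p ^ a * q ^ b) • x := by rw [hp, smul_smul, mul_comm]
  · calc q ^ t • (p ^ a * q ^ b) • x = p ^ a • q ^ (b + t) • x := by
          rw [smul_smul, smul_smul]; ring_nf
      _ = (p ^ a * q ^ b) • x := by rw [hq, smul_smul]

theorem Submonoid.closure_pow_pair_le {M : Type*} [Monoid M] (a b : M) (s t : ℕ) :
    Submonoid.closure {a ^ s, b ^ t} ≤ Submonoid.closure {a, b} :=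
  Submonoid.closure_le.mpr <| by
    rintro _ (rfl | rfl) <;> exact pow_mem (Submonoid.subset_closure (by simp)) _

theorem UnitAddCircle.dist_coe_le (a b : ℝ) : dist (a : UnitAddCircle) b ≤ |a - b| := by
  rw [dist_eq_norm, ← AddCircle.coe_sub]
  exact QuotientAddGroup.norm_mk_le_norm

theorem UnitAddCircle.exists_coe_eq_abs_eq_norm (u : UnitAddCircle) :
    ∃ w : ℝ, (w : UnitAddCircle) = u ∧ |w| = ‖u‖ := by
  obtain ⟨x, rfl⟩ := QuotientAddGroup.mk_surjective u
  refine ⟨x - round x, ?_, UnitAddCircle.norm_eq.symm⟩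
  rw [AddCircle.coe_sub, sub_eq_self, AddCircle.coe_eq_zero_iff]
  exact ⟨round x, by simp⟩

theorem UnitAddCircle.exists_mem_Ico_coe_eq (τ : UnitAddCircle) :
    ∃ z ∈ Ico (0 : ℝ) 1, (z : UnitAddCircle) = τ := by
  obtain ⟨x, rfl⟩ := QuotientAddGroup.mk_surjective τ
  refine ⟨Int.fract x, ⟨Int.fract_nonneg x, Int.fract_lt_one x⟩, ?_⟩
  rw [Int.fract, AddCircle.coe_sub, sub_eq_self, AddCircle.coe_eq_zero_iff]
  exact ⟨⌊x⌋, by simp⟩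

theorem AddCircle.nsmul_ne_zero_of_mul_norm_lt {p : ℝ} [Fact (0 < p)] {u : AddCircle p} {n : ℕ}
    (hn : n ≠ 0) (hu : u ≠ 0) (h : n * ‖u‖ < p) : n • u ≠ 0 := by
  intro h0
  have hfin : IsOfFinAddOrder u :=
    isOfFinAddOrder_iff_nsmul_eq_zero.mpr ⟨n, Nat.pos_of_ne_zero hn, h0⟩
  have hle : (addOrderOf u : ℝ) ≤ n := by
    exact_mod_cast Nat.le_of_dvd (Nat.pos_of_ne_zero hn) (addOrderOf_dvd_of_nsmul_eq_zero h0)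
  have := le_add_order_smul_norm_of_isOfFinAddOrder hfin hu
  rw [nsmul_eq_mul] at this
  nlinarith [norm_nonneg u]

theorem AccPt.nsmul {p : ℝ} [Fact (0 < p)] {S : Set (AddCircle p)} {z : AddCircle p}
    (hz : AccPt z (𝓟 S)) {n : ℕ} (hn : n ≠ 0) (hS : ∀ x ∈ S, n • x ∈ S) : AccPt (n • z) (𝓟 S) := by
  rw [accPt_iff_frequently] at hz ⊢
  have hinj : ∀ᶠ y in 𝓝 z, y ≠ z → n • y ≠ n • z := by
    have hn' : (0 : ℝ) < n := by exact_mod_cast Nat.pos_of_ne_zero hn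
    filter_upwards [Metric.ball_mem_nhds z (div_pos (Fact.out : 0 < p) hn')] with y hy hyz
    rw [Ne, ← sub_eq_zero, ← nsmul_sub]
    refine AddCircle.nsmul_ne_zero_of_mul_norm_lt hn (sub_ne_zero.mpr hyz) ?_
    rw [Metric.mem_ball, dist_eq_norm, lt_div_iff₀ hn'] at hy
    linarith
  exact ((continuous_const_smul n).tendsto z).frequently
    ((hz.and_eventually hinj).mono fun y ⟨⟨hyz, hyS⟩, h⟩ => ⟨h hyz, hS y hyS⟩)

theorem IsNonLacunary.exists_nsmul_coe_dist_lt {M : Submonoid ℕ} (hM : IsNonLacunary M) {ε : ℝ}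
    (hε : 0 < ε) : ∃ η > 0, ∀ w : ℝ, w ≠ 0 → |w| < η → ∀ τ : UnitAddCircle,
      ∃ n ∈ M, dist (n • (w : UnitAddCircle)) τ < ε := by
  obtain ⟨Y, hY⟩ := eventually_atTop.mp (hM (ε / 2) (half_pos hε))
  refine ⟨(max Y 1)⁻¹, by positivity, fun w hw hwη τ => ?_⟩
  wlog hw0 : 0 < w generalizing w τ
  · obtain ⟨n, hn, h⟩ := this (-w) (neg_ne_zero.mpr hw) (by rwa [abs_neg]) (-τ)
      (neg_pos.mpr (lt_of_le_of_ne (not_lt.mp hw0) hw))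
    exact ⟨n, hn, by rwa [AddCircle.coe_neg, smul_neg, dist_neg_neg] at h⟩
  obtain ⟨z, ⟨hz0, hz1⟩, rfl⟩ := UnitAddCircle.exists_mem_Ico_coe_eq τ
  rw [abs_of_pos hw0, lt_inv_comm₀ hw0 (by positivity)] at hwη
  have hYw : Y ≤ (1 + z) / w :=
    (le_max_left Y 1).trans <| hwη.le.trans <| by rw [inv_eq_one_div]; gcongr; linarith
  -- `n * w` lands in `[1 + z, (1 + ε / 2) * (1 + z)]`, of length `< ε`, and `↑(1 + z) = ↑z`
  obtain ⟨n, hn, hn1, hn2⟩ := hY _ hYw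
  rw [div_le_iff₀ hw0] at hn1
  rw [mul_div_assoc', le_div_iff₀ hw0] at hn2
  refine ⟨n, hn, ?_⟩
  rw [← AddCircle.coe_nsmul, nsmul_eq_mul, ← AddCircle.coe_add_period 1 z]
  refine (UnitAddCircle.dist_coe_le _ _).trans_lt (abs_sub_lt_iff.mpr ⟨?_, ?_⟩) <;> nlinarith

theorem IsNonLacunary.dense_of_accPt {M : Submonoid ℕ} (hM : IsNonLacunary M)
    {B : Set UnitAddCircle} (hB : ∀ n ∈ M, ∀ x ∈ B, n • x ∈ B) {c : UnitAddCircle}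
    (hc : AccPt c (𝓟 B)) (hMc : ∀ n ∈ M, n • c = c) : Dense B := by
  refine Metric.dense_iff.mpr fun τ ε hε => ?_
  obtain ⟨η, hη, hM⟩ := hM.exists_nsmul_coe_dist_lt hε
  obtain ⟨y, ⟨hyc, hyB⟩, hy⟩ := accPt_iff_nhds.mp hc _ (Metric.ball_mem_nhds c hη)
  obtain ⟨w, hw, hwy⟩ := UnitAddCircle.exists_coe_eq_abs_eq_norm (y - c)
  have hw0 : w ≠ 0 := by rintro rfl; exact hy (sub_eq_zero.mp (by simpa using hw.symm))
  obtain ⟨n, hn, hnw⟩ := hM w hw0 (by rwa [hwy, ← dist_eq_norm]) (τ - c)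
  refine ⟨n • y, ?_, hB n hn y hyB⟩
  have hny : n • y = n • (y - c) + c := by rw [nsmul_sub, hMc n hn, sub_add_cancel]
  rwa [Metric.mem_ball, hny, ← sub_add_cancel τ c, dist_add_right, ← hw]

theorem IsNonLacunary.exists_add_mem {M : Submonoid ℕ} (hM : IsNonLacunary M)
    {C : Set UnitAddCircle} (hC : IsClosed C) (hCM : ∀ n ∈ M, ∀ x ∈ C, n • x ∈ C)
    (hCinf : C.Infinite) (τ : UnitAddCircle) : ∃ x ∈ C, x + τ ∈ C := by
  obtain ⟨z, hz⟩ := hCinf.exists_accPt_principal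
  have hzC : z ∈ C := (isClosed_iff_derivedSet_subset C).mp hC hz
  have hacc : AccPt 0 (𝓟 (C - C)) := by
    have := hz.map (continuous_sub_right z).continuousAt (sub_left_injective (b := z))
    rw [sub_self, map_principal] at this
    exact this.mono (principal_mono.mpr (image_subset_iff.mpr fun y hy => sub_mem_sub hy hzC))
  have hdense : Dense (C - C) := by
    refine hM.dense_of_accPt ?_ hacc fun n _ => nsmul_zero n
    rintro n hn _ ⟨a, ha, b, hb, rfl⟩
    exact nsmul_sub a b n ▸ sub_mem_sub (hCM n hn a ha) (hCM n hn b hb)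
  obtain ⟨a, ha, b, hb, hab⟩ : τ ∈ C - C := by
    have hCC : IsClosed (C - C) := by
      rw [← sub_image_prod]
      exact ((hC.isCompact.prod hC.isCompact).image continuous_sub).isClosed
    rw [← hCC.closure_eq, hdense.closure_eq]
    trivial
  exact ⟨b, hb, by rwa [← hab, add_sub_cancel]⟩

theorem IsNonLacunary.exists_forall_add_nsmul_mem {M : Submonoid ℕ} (hM : IsNonLacunary M)
    {n₀ : ℕ} (hn₀ : 2 ≤ n₀) (hn₀M : n₀ ∈ M) {A : Set UnitAddCircle} (hA : IsClosed A)
    (hAM : ∀ n ∈ M, ∀ x ∈ A, n • x ∈ A) (hAne : A.Nonempty) (hAt : ∀ x ∈ A, ¬IsOfFinAddOrder x)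
    {τ : UnitAddCircle} (hτ : ∀ n ∈ M, n • τ = τ) (m : ℕ) : ∃ x, ∀ j ≤ m, x + j • τ ∈ A := by
  induction m with
  | zero => obtain ⟨x, hx⟩ := hAne; exact ⟨x, by simpa⟩
  | succ m ih =>
    set P := {x | ∀ j ≤ m, x + j • τ ∈ A}
    have hP : IsClosed P := by
      simp only [P, ofPred_forall]
      exact isClosed_iInter fun j => isClosed_iInter fun _ => hA.preimage (continuous_add_const _)
    have hPM : ∀ n ∈ M, ∀ x ∈ P, n • x ∈ P := fun n hn x hx j hj => by
      simpa [nsmul_add, smul_comm n j τ, hτ n hn] using hAM n hn _ (hx j hj)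
    obtain ⟨x₀, hx₀⟩ := ih
    have hPinf : P.Infinite := infinite_of_not_isOfFinAddOrder hPM hn₀ hn₀M hx₀
      (hAt _ (by simpa using hx₀ 0 (Nat.zero_le m)))
    obtain ⟨x, hx, hxτ⟩ := hM.exists_add_mem hP hPM hPinf τ
    refine ⟨x, fun j hj => ?_⟩
    rcases Nat.lt_or_ge j (m + 1) with hjm | hjm
    · exact hx j (Nat.lt_succ_iff.mp hjm)
    · simpa [le_antisymm hj hjm, succ_nsmul', add_assoc] using hxτ m le_rfl

theorem UnitAddCircle.exists_dist_add_nsmul_le (x w : UnitAddCircle) {q : ℕ} (hq : q ≠ 0) :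
    ∃ j < q, dist (x + j • (((q : ℝ)⁻¹ : ℝ) : UnitAddCircle)) w ≤ (q : ℝ)⁻¹ := by
  obtain ⟨c, ⟨hc0, hc1⟩, hc⟩ := UnitAddCircle.exists_mem_Ico_coe_eq (w - x)
  have hq' : (0 : ℝ) < q := by exact_mod_cast Nat.pos_of_ne_zero hq
  refine ⟨⌊c * q⌋₊, (Nat.floor_lt (by positivity)).mpr (by nlinarith), ?_⟩
  rw [← sub_add_cancel w x, ← hc, add_comm x, dist_add_right, ← AddCircle.coe_nsmul, nsmul_eq_mul,
    dist_comm]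
  refine (UnitAddCircle.dist_coe_le _ _).trans ?_
  have h1 := Nat.floor_le (by positivity : 0 ≤ c * q)
  have h2 := Nat.lt_floor_add_one (c * q)
  rw [show c - ⌊c * q⌋₊ * (q : ℝ)⁻¹ = (c * q - ⌊c * q⌋₊) * (q : ℝ)⁻¹ by field_simp, abs_le]
  constructor <;> nlinarith [inv_pos.mpr hq']

theorem dense_of_accPt_of_isOfFinAddOrder {S : Set UnitAddCircle}
    (hS : ∀ n ∈ Submonoid.closure {2, 3}, ∀ x ∈ S, n • x ∈ S) {r : UnitAddCircle}
    (hr : AccPt r (𝓟 S)) (hrt : IsOfFinAddOrder r) : Dense S := by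
  obtain ⟨a, b, s, t, hs, ht, h2, h3⟩ := hrt.exists_pow_mul_pow_nsmul_fixed 2 3
  have hm : 2 ^ a * 3 ^ b ∈ Submonoid.closure {2, 3} :=
    (Submonoid.mem_closure_pair _ _ _).mpr ⟨a, b, rfl⟩
  refine (isNonLacunary_closure_two_pow_three_pow hs ht).dense_of_accPt
    (fun n hn => hS n (Submonoid.closure_pow_pair_le 2 3 s t hn))
    (hr.nsmul (by positivity) (hS _ hm)) fun n hn => ?_
  exact Submonoid.nsmul_eq_self_of_mem_closure (by rintro _ (rfl | rfl) <;> assumption) hn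

theorem dense_of_forall_not_isOfFinAddOrder {A : Set UnitAddCircle} (hA : IsClosed A)
    (hAne : A.Nonempty) (hAM : ∀ n ∈ Submonoid.closure {2, 3}, ∀ x ∈ A, n • x ∈ A)
    (hAt : ∀ x ∈ A, ¬IsOfFinAddOrder x) : Dense A := by
  refine Metric.dense_iff.mpr fun w ε hε => ?_
  obtain ⟨N, hN⟩ := exists_nat_one_div_lt hε
  -- `τ = 1 / q` with `q` prime to `6` is fixed by `2 ^ φ(q)` and `3 ^ φ(q)`
  set q := 6 * N + 1
  set k := q.totient
  have hk : k ≠ 0 := (Nat.totient_pos.mpr (by omega)).ne'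
  set τ : UnitAddCircle := (((q : ℝ)⁻¹ : ℝ) : UnitAddCircle) with hτ_def
  have hqτ : q • τ = 0 := by
    rw [hτ_def, ← AddCircle.coe_nsmul (p := (1 : ℝ)), nsmul_eq_mul, mul_inv_cancel₀ (by positivity)]
    exact AddCircle.coe_period (p := (1 : ℝ))
  have hτ : ∀ n ∈ Submonoid.closure {2 ^ k, 3 ^ k}, n • τ = τ := by
    refine fun n hn => Submonoid.nsmul_eq_self_of_mem_closure ?_ hn
    rintro _ (rfl | rfl) <;> refine nsmul_eq_self_of_modEq_one hqτ (Nat.ModEq.pow_totient ?_)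
    all_goals exact (Nat.Prime.coprime_iff_not_dvd (by norm_num)).mpr (by omega)
  obtain ⟨x, hx⟩ := (isNonLacunary_closure_two_pow_three_pow hk hk).exists_forall_add_nsmul_mem
    (Nat.one_lt_two_pow hk) (Submonoid.subset_closure (by simp)) hA
    (fun n hn => hAM n (Submonoid.closure_pow_pair_le 2 3 k k hn)) hAne hAt hτ q
  obtain ⟨j, hjq, hj⟩ := UnitAddCircle.exists_dist_add_nsmul_le x w (by omega : q ≠ 0)
  refine ⟨_, hj.trans_lt (lt_of_le_of_lt ?_ hN), hx j hjq.le⟩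
  rw [one_div]
  exact inv_anti₀ (by positivity) (by simp only [q]; push_cast; linarith)

theorem furstenberg_times_two_times_three_general
    (S : Set (AddCircle (1 : ℝ))) (hclosed : IsClosed S)
    (h2 : ∀ x ∈ S, (2 : ℤ) • x ∈ S) (h3 : ∀ x ∈ S, (3 : ℤ) • x ∈ S) :
    S.Finite ∨ S = Set.univ := by
  refine S.finite_or_infinite.imp_right fun hinf => ?_
  have hSM : ∀ n ∈ Submonoid.closure {2, 3}, ∀ x ∈ S, n • x ∈ S :=
    Submonoid.forall_mem_closure_nsmul_mem <| by
      rintro _ (rfl | rfl) x hx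
      · rw [← natCast_zsmul]; exact h2 x hx
      · rw [← natCast_zsmul]; exact h3 x hx
  suffices hS : Dense S by rw [← hclosed.closure_eq, hS.closure_eq]
  by_cases htor : ∃ r ∈ derivedSet S, IsOfFinAddOrder r
  · obtain ⟨r, hr, hrt⟩ := htor
    exact dense_of_accPt_of_isOfFinAddOrder hSM hr hrt
  · refine .mono ((isClosed_iff_derivedSet_subset S).mp hclosed) <|
      dense_of_forall_not_isOfFinAddOrder (isClosed_derivedSet S) hinf.exists_accPt_principal ?_
        fun r hr hrt => htor ⟨r, hr, hrt⟩
    intro n hn x hx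
    obtain ⟨a, b, rfl⟩ := (Submonoid.mem_closure_pair _ _ _).mp hn
    exact hx.nsmul (by positivity) (hSM _ hn)

/-- Furstenberg's theorem: a nonempty closed subset of the circle `ℝ/ℤ`
invariant under multiplication by `2` and by `3` is either finite or the whole
circle. -/
theorem furstenberg_times_two_times_three
    (S : Set (AddCircle (1 : ℝ))) (hne : S.Nonempty) (hclosed : IsClosed S)
    (h2 : ∀ x ∈ S, (2 : ℤ) • x ∈ S) (h3 : ∀ x ∈ S, (3 : ℤ) • x ∈ S) :
    S.Finite ∨ S = Set.univ :=
  furstenberg_times_two_times_three_general S hclosed h2 h3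
end
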